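/- Let d ≥ 1, let Ω ⊆ ℝ^d be an open set, let n_p ≥ 1, and for i = 1, …, n_p let x_i ∈ ℝ^d ∖ closure(Ω), let d̂_i ∈ ℝ^d be unit vectors, and let α_i ∈ ℝ. Define h : Ω → ℝ^d by h(x) = Σ_{i=1}^{n_p} α_i (d·(r_i r_iᵀ)/‖r_i‖² − I) d̂_i / ‖r_i‖^d with r_i = x − x_i. Then h satisfies the magnetostatic equations on Ω: for every x ∈ Ω, the Jacobian Dh(x) is symmetric (curl h = 0) and its trace vanishes (div h = 0). -/

import Mathlib

/-!
The field of the dipole at `0` with direction `u` is `-∇(⟪y, u⟫ / ‖y‖ ^ d)`, and its Jacobian is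
`d / ‖y‖ ^ (d + 2) • (y ⊗ u + u ⊗ y + ⟪y, u⟫ • I) - d (d + 2) ⟪y, u⟫ / ‖y‖ ^ (d + 4) • y ⊗ y`,
visibly symmetric. In dimension `d` its trace is
`d (d + 2) ⟪y, u⟫ / ‖y‖ ^ (d + 2) - d (d + 2) ⟪y, u⟫ ‖y‖ ^ 2 / ‖y‖ ^ (d + 4) = 0`.
Both properties are linear in the Jacobian, so they pass to superpositions of translated dipoles,
which are differentiable away from the dipole positions, in particular on `Ω`.
-/

open RealInnerProductSpace InnerProductSpace

section Dipole

variable {E : Type*} [NormedAddCommGroup E] [InnerProductSpace ℝ E]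

theorem hasFDerivAt_norm_of_ne_zero {y : E} (hy : y ≠ 0) :
    HasFDerivAt (‖·‖) (‖y‖⁻¹ • innerSL ℝ y) y := by
  have hsqrt := (Real.hasDerivAt_sqrt (by positivity : ‖y‖ ^ 2 ≠ 0)).comp_hasFDerivAt y
    (hasStrictFDerivAt_norm_sq y).hasFDerivAt
  simp only [Function.comp_def, Real.sqrt_sq (norm_nonneg _)] at hsqrt
  refine hsqrt.congr_fderiv ?_
  ext v
  simp only [one_div, mul_inv_rev, smul_apply, coe_innerSL_apply, nsmul_eq_mul, Nat.cast_ofNat,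
    smul_eq_mul]
  field_simp

theorem hasFDerivAt_inv_norm_pow (n : ℕ) {y : E} (hy : y ≠ 0) :
    HasFDerivAt (fun x : E => (‖x‖ ^ n)⁻¹) (-((n : ℝ) / ‖y‖ ^ (n + 2)) • innerSL ℝ y) y := by
  have hpow := ((hasDerivAt_pow n ‖y‖).inv (by positivity)).comp_hasFDerivAt y
    (hasFDerivAt_norm_of_ne_zero hy)
  refine hpow.congr_fderiv ?_
  ext v
  rcases n with _ | k
  · simp
  · simp only [Nat.cast_add, Nat.cast_one, add_tsub_cancel_right, smul_apply, coe_innerSL_apply,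
      smul_eq_mul, neg_smul, neg_apply]
    field_simp
    ring

theorem hasFDerivAt_inner_div_norm_sq (c : ℝ) (u : E) {y : E} (hy : y ≠ 0) :
    HasFDerivAt (fun x : E => c * ⟪x, u⟫ / ‖x‖ ^ 2)
      ((c / ‖y‖ ^ 2) • innerSL ℝ u - (2 * c * ⟪y, u⟫ / ‖y‖ ^ 4) • innerSL ℝ y) y := by
  have hinner : HasFDerivAt (fun x : E => ⟪x, u⟫) (innerSL ℝ u) y := by
    have hfun : (fun x : E => ⟪x, u⟫) = innerSL ℝ u := by
      ext x
      simp only [real_inner_comm, coe_innerSL_apply]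
    exact hfun ▸ (innerSL ℝ u).hasFDerivAt
  have hquot := (hinner.const_mul c).mul
    ((hasDerivAt_inv (by positivity : ‖y‖ ^ 2 ≠ 0)).comp_hasFDerivAt y
      (hasStrictFDerivAt_norm_sq y).hasFDerivAt)
  simp only [Function.comp_def] at hquot
  refine hquot.congr_fderiv ?_
  ext v
  simp only [neg_smul, smul_neg, add_apply, neg_apply, sub_apply, smul_apply, coe_innerSL_apply,
    nsmul_eq_mul, Nat.cast_ofNat, smul_eq_mul]
  field_simp
  ring

noncomputable def dipoleField (n : ℕ) (u y : E) : E :=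
  (‖y‖ ^ n)⁻¹ • ((((n : ℝ) * ⟪y, u⟫) / ‖y‖ ^ 2) • y - u)

noncomputable def dipoleFieldDeriv (n : ℕ) (u y : E) : E →L[ℝ] E :=
  ((n : ℝ) / ‖y‖ ^ (n + 2)) •
      (rankOne ℝ y u + rankOne ℝ u y + ⟪y, u⟫ • ContinuousLinearMap.id ℝ E)
    - ((n : ℝ) * (n + 2) * ⟪y, u⟫ / ‖y‖ ^ (n + 4)) • rankOne ℝ y y

theorem hasFDerivAt_dipoleField (n : ℕ) (u : E) {y : E} (hy : y ≠ 0) :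
    HasFDerivAt (dipoleField n u) (dipoleFieldDeriv n u y) y := by
  have hfield := (hasFDerivAt_inv_norm_pow n hy).smul
    (((hasFDerivAt_inner_div_norm_sq (n : ℝ) u hy).smul (hasFDerivAt_id y)).sub_const u)
  refine hfield.congr_fderiv ?_
  ext v
  simp only [dipoleFieldDeriv, id_eq, smul_add, neg_smul, Pi.smul_apply', add_apply, sub_apply,
    neg_apply, smul_apply, ContinuousLinearMap.id_apply, ContinuousLinearMap.smulRight_apply,
    coe_innerSL_apply, smul_eq_mul, rankOne_apply]
  match_scalars <;> field_simp <;> ring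

theorem isSymmetric_dipoleFieldDeriv (n : ℕ) (u y : E) :
    (dipoleFieldDeriv n u y : E →ₗ[ℝ] E).IsSymmetric := by
  intro v w
  simp only [dipoleFieldDeriv, real_inner_comm, smul_add, ContinuousLinearMap.toLinearMap_sub,
    ContinuousLinearMap.toLinearMap_add, ContinuousLinearMap.toLinearMap_smul,
    ContinuousLinearMap.coe_id, LinearMap.sub_apply, LinearMap.add_apply, LinearMap.smul_apply,
    ContinuousLinearMap.coe_coe, rankOne_apply, LinearMap.id_coe, id_eq, inner_sub_left,
    inner_add_left, real_inner_smul_right, inner_sub_right, inner_add_right]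
  ring

theorem trace_dipoleFieldDeriv [FiniteDimensional ℝ E] {n : ℕ} (hn : Module.finrank ℝ E = n)
    (u : E) {y : E} (hy : y ≠ 0) :
    LinearMap.trace ℝ E (dipoleFieldDeriv n u y) = 0 := by
  simp only [dipoleFieldDeriv, real_inner_comm u y, smul_add, ContinuousLinearMap.toLinearMap_sub,
    ContinuousLinearMap.toLinearMap_add, ContinuousLinearMap.toLinearMap_smul,
    ContinuousLinearMap.coe_id, map_sub, map_add, map_smul, trace_rankOne, smul_eq_mul,
    LinearMap.trace_id, hn, real_inner_self_eq_norm_sq]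
  field_simp
  ring

end Dipole

theorem dipole_superposition_magnetostatic_general (d : ℕ)
    (Ω : Set (EuclideanSpace ℝ (Fin d)))
    (np : ℕ)
    (p : Fin np → EuclideanSpace ℝ (Fin d))
    (hp : ∀ i, p i ∉ closure Ω)
    (dv : Fin np → EuclideanSpace ℝ (Fin d))
    (α : Fin np → ℝ)
    (h : EuclideanSpace ℝ (Fin d) → EuclideanSpace ℝ (Fin d))
    (hh : ∀ x, h x = ∑ i : Fin np,
      α i • ((‖x - p i‖ ^ d)⁻¹ •
        ((((d : ℝ) * ⟪x - p i, dv i⟫) / ‖x - p i‖ ^ 2) • (x - p i) - dv i))) :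
    ∀ x ∈ Ω,
      (∀ v w : EuclideanSpace ℝ (Fin d),
          ⟪fderiv ℝ h x v, w⟫ = ⟪fderiv ℝ h x w, v⟫) ∧
        ∑ i : Fin d,
          ⟪fderiv ℝ h x (EuclideanSpace.single i 1),
            EuclideanSpace.single i 1⟫ = 0 := by
  intro x hx
  have hxp : ∀ i, x - p i ≠ 0 := fun i =>
    sub_ne_zero.mpr fun hxi => hp i (hxi ▸ subset_closure hx)
  set T := ∑ i, α i • dipoleFieldDeriv d (dv i) (x - p i)
  have hT : fderiv ℝ h x = T := by
    rw [show h = fun z => ∑ i, α i • dipoleField d (dv i) (z - p i) from funext hh]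
    refine (HasFDerivAt.fun_sum fun i _ => HasFDerivAt.const_smul ?_ (α i)).fderiv
    exact (hasFDerivAt_comp_sub (p i)).mpr (hasFDerivAt_dipoleField d (dv i) (hxp i))
  have hsymm : (T : EuclideanSpace ℝ (Fin d) →ₗ[ℝ] _).IsSymmetric := by
    rw [ContinuousLinearMap.toLinearMap_sum]
    exact LinearMap.isSymmetric_sum _ fun i _ =>
      (isSymmetric_dipoleFieldDeriv d (dv i) (x - p i)).smul (conj_trivial (α i))
  have htrace : LinearMap.trace ℝ _ (T : EuclideanSpace ℝ (Fin d) →ₗ[ℝ] _) = 0 := by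
    simp [T, trace_dipoleFieldDeriv finrank_euclideanSpace_fin _ (hxp _)]
  rw [hT]
  refine ⟨fun v w => (hsymm v w).trans (real_inner_comm _ _), ?_⟩
  rw [← htrace, LinearMap.trace_eq_sum_inner _ (EuclideanSpace.basisFun (Fin d) ℝ)]
  simp [real_inner_comm]

/-- A superposition of dipole fields, with intensities `α i`, dipole positions
`p i` outside the closure of the domain and unit directions `dv i`, satisfies
the magnetostatic equations `curl h = 0` (symmetric Jacobian) and `div h = 0`
(traceless Jacobian) on the open set `Ω`. -/
theorem dipole_superposition_magnetostatic (d : ℕ) (hd : 1 ≤ d)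
    (Ω : Set (EuclideanSpace ℝ (Fin d))) (hΩ : IsOpen Ω)
    (np : ℕ) (hnp : 1 ≤ np)
    (p : Fin np → EuclideanSpace ℝ (Fin d))
    (hp : ∀ i, p i ∉ closure Ω)
    (dv : Fin np → EuclideanSpace ℝ (Fin d)) (hdv : ∀ i, ‖dv i‖ = 1)
    (α : Fin np → ℝ)
    (h : EuclideanSpace ℝ (Fin d) → EuclideanSpace ℝ (Fin d))
    (hh : ∀ x, h x = ∑ i : Fin np,
      α i • ((‖x - p i‖ ^ d)⁻¹ •
        ((((d : ℝ) * ⟪x - p i, dv i⟫) / ‖x - p i‖ ^ 2) • (x - p i) - dv i))) :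
    ∀ x ∈ Ω,
      (∀ v w : EuclideanSpace ℝ (Fin d),
          ⟪fderiv ℝ h x v, w⟫ = ⟪fderiv ℝ h x w, v⟫) ∧
        ∑ i : Fin d,
          ⟪fderiv ℝ h x (EuclideanSpace.single i 1),
            EuclideanSpace.single i 1⟫ = 0 :=
  dipole_superposition_magnetostatic_general d Ω np p hp dv α h hh
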